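/- arXiv:2402.18993 — 6 statements merged into one kernel-verified Lean document; each statement's English description precedes it below -/
import Mathlib

section
/- Let a ∈ ℝ and let M : ℝ → ℝ be differentiable. For all v ∈ ℝ, r > 0, ϑ ∈ (0,π), the coordinate divergence of the unit-normal vector field of the constant-r surfaces in Kerr–Vaidya spacetime satisfies ∂_v(ρ²·sinϑ·(g(v,r,ϑ)⁻¹)₀₁) + ∂_r(ρ²·sinϑ·(g(v,r,ϑ)⁻¹)₁₁) + ∂_ϑ(ρ²·sinϑ·(g(v,r,ϑ)⁻¹)₂₁) = −2·(M(v) − r)·sinϑ; equivalently, the trace of the extrinsic curvature of the surface of constant r embedded in Kerr–Vaidya spacetime equals K_g = −2·(M(v)−r)/ρ². -/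
noncomputable section

open Real

/-- ρ² = r² + a²·cos²ϑ. -/
def rho2 (a r θ : ℝ) : ℝ := r ^ 2 + a ^ 2 * Real.cos θ ^ 2

/-- The Kerr–Vaidya metric matrix in ingoing Eddington–Finkelstein-type coordinates
`(v,r,ϑ,ψ)`, for mass function `M` and rotation parameter `a`. -/
def kerrVaidyaMatrix (a : ℝ) (M : ℝ → ℝ) (v r θ : ℝ) : Matrix (Fin 4) (Fin 4) ℝ :=
  !![-(1 - 2 * M v * r / rho2 a r θ), 1, 0,
       -(2 * M v * a * r * Real.sin θ ^ 2 / rho2 a r θ);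
     1, 0, 0, -(a * Real.sin θ ^ 2);
     0, 0, rho2 a r θ, 0;
     -(2 * M v * a * r * Real.sin θ ^ 2 / rho2 a r θ), -(a * Real.sin θ ^ 2), 0,
       ((r ^ 2 + a ^ 2) ^ 2
           - (r ^ 2 - 2 * M v * r + a ^ 2) * a ^ 2 * Real.sin θ ^ 2)
         * Real.sin θ ^ 2 / rho2 a r θ]

set_option maxHeartbeats 2000000

def kvInv (a : ℝ) (M : ℝ → ℝ) (v r θ : ℝ) : Matrix (Fin 4) (Fin 4) ℝ :=
  !![a ^ 2 * Real.sin θ ^ 2 / rho2 a r θ, (r ^ 2 + a ^ 2) / rho2 a r θ, 0, a / rho2 a r θ;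
     (r ^ 2 + a ^ 2) / rho2 a r θ, (r ^ 2 - 2 * M v * r + a ^ 2) / rho2 a r θ, 0, a / rho2 a r θ;
     0, 0, 1 / rho2 a r θ, 0;
     a / rho2 a r θ, a / rho2 a r θ, 0, 1 / (Real.sin θ ^ 2 * rho2 a r θ)]

lemma kv_mul_inv (a : ℝ) (M : ℝ → ℝ) (v r θ : ℝ) (hρ : rho2 a r θ ≠ 0)
    (hs : Real.sin θ ≠ 0) :
    kerrVaidyaMatrix a M v r θ * kvInv a M v r θ = 1 := by
  have hc : Real.cos θ ^ 2 = 1 - Real.sin θ ^ 2 := Real.cos_sq' θ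
  simp only [rho2, hc] at hρ
  ext i j
  fin_cases i <;> fin_cases j <;>
    simp [kerrVaidyaMatrix, kvInv, Matrix.mul_apply, Fin.sum_univ_four, rho2, hc,
      Matrix.one_apply] <;>
    field_simp <;> ring

lemma kv_inv_eq (a : ℝ) (M : ℝ → ℝ) (v r θ : ℝ) (hρ : rho2 a r θ ≠ 0)
    (hs : Real.sin θ ≠ 0) :
    (kerrVaidyaMatrix a M v r θ)⁻¹ = kvInv a M v r θ :=
  Matrix.inv_eq_right_inv (kv_mul_inv a M v r θ hρ hs)

/-- The coordinate divergence of the unit-normal field of the constant-`r` surfaces in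
Kerr–Vaidya spacetime equals `−2(M(v)−r)·sinϑ`; equivalently, the trace of the extrinsic
curvature of the surface of constant `r` equals `K_g = −2(M(v)−r)/ρ²`. -/
theorem kerrVaidya_extrinsic_curvature_trace (a : ℝ) (M : ℝ → ℝ)
    (hM : Differentiable ℝ M) (v r θ : ℝ) (hr : 0 < r) (hθ : θ ∈ Set.Ioo 0 π) :
    deriv (fun v' => rho2 a r θ * Real.sin θ * (kerrVaidyaMatrix a M v' r θ)⁻¹ 0 1) v
        + deriv (fun r' => rho2 a r' θ * Real.sin θ * (kerrVaidyaMatrix a M v r' θ)⁻¹ 1 1) r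
        + deriv (fun θ' => rho2 a r θ' * Real.sin θ' * (kerrVaidyaMatrix a M v r θ')⁻¹ 2 1) θ
      = -2 * (M v - r) * Real.sin θ ∧
    (rho2 a r θ * Real.sin θ)⁻¹ *
        (deriv (fun v' => rho2 a r θ * Real.sin θ * (kerrVaidyaMatrix a M v' r θ)⁻¹ 0 1) v
          + deriv (fun r' => rho2 a r' θ * Real.sin θ * (kerrVaidyaMatrix a M v r' θ)⁻¹ 1 1) r
          + deriv (fun θ' => rho2 a r θ' * Real.sin θ' * (kerrVaidyaMatrix a M v r θ')⁻¹ 2 1) θ)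
      = -2 * (M v - r) / rho2 a r θ := by
  have hrne : r ≠ 0 := hr.ne'
  have hs : Real.sin θ ≠ 0 := ne_of_gt (Real.sin_pos_of_pos_of_lt_pi hθ.1 hθ.2)
  have hρθ : ∀ θ' : ℝ, rho2 a r θ' ≠ 0 := fun θ' => by
    have : 0 < rho2 a r θ' := by unfold rho2; positivity
    exact this.ne'
  have hρ : rho2 a r θ ≠ 0 := hρθ θ
  -- v-derivative
  have e1 : (fun v' => rho2 a r θ * Real.sin θ * (kerrVaidyaMatrix a M v' r θ)⁻¹ 0 1)
      = fun _ => (r ^ 2 + a ^ 2) * Real.sin θ := by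
    funext v'
    rw [kv_inv_eq a M v' r θ hρ hs]
    simp only [kvInv, Matrix.cons_val', Matrix.cons_val_zero, Matrix.cons_val_one,
      Matrix.head_cons, Matrix.empty_val', Matrix.cons_val_fin_one, Matrix.of_apply]
    field_simp
  have d1 : deriv (fun v' => rho2 a r θ * Real.sin θ * (kerrVaidyaMatrix a M v' r θ)⁻¹ 0 1) v
      = 0 := by rw [e1]; exact deriv_const v _
  -- r-derivative
  have e2 : (fun r' => rho2 a r' θ * Real.sin θ * (kerrVaidyaMatrix a M v r' θ)⁻¹ 1 1)
      =ᶠ[nhds r] fun r' => (r' ^ 2 - 2 * M v * r' + a ^ 2) * Real.sin θ := by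
    filter_upwards [Ioi_mem_nhds hr] with r' hr'
    have hρ' : rho2 a r' θ ≠ 0 := by
      have : 0 < rho2 a r' θ := by
        have : r' ≠ 0 := (Set.mem_Ioi.mp hr').ne'
        unfold rho2; positivity
      exact this.ne'
    rw [kv_inv_eq a M v r' θ hρ' hs]
    simp only [kvInv, Matrix.cons_val', Matrix.cons_val_zero, Matrix.cons_val_one,
      Matrix.head_cons, Matrix.empty_val', Matrix.cons_val_fin_one, Matrix.of_apply]
    field_simp
  have hd2 : HasDerivAt (fun r' : ℝ => (r' ^ 2 - 2 * M v * r' + a ^ 2) * Real.sin θ)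
      ((2 * r - 2 * M v) * Real.sin θ) r := by
    have h := (((hasDerivAt_pow 2 r).sub ((hasDerivAt_id r).const_mul (2 * M v))).add_const
      (a ^ 2)).mul_const (Real.sin θ)
    exact h.congr_deriv (by norm_num)
  have d2 : deriv (fun r' => rho2 a r' θ * Real.sin θ * (kerrVaidyaMatrix a M v r' θ)⁻¹ 1 1) r
      = (2 * r - 2 * M v) * Real.sin θ := by
    rw [Filter.EventuallyEq.deriv_eq e2, hd2.deriv]
  -- θ-derivative
  have e3 : (fun θ' => rho2 a r θ' * Real.sin θ' * (kerrVaidyaMatrix a M v r θ')⁻¹ 2 1)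
      =ᶠ[nhds θ] fun _ => (0 : ℝ) := by
    filter_upwards [Ioo_mem_nhds hθ.1 hθ.2] with θ' hθ'
    have hs' : Real.sin θ' ≠ 0 := ne_of_gt (Real.sin_pos_of_pos_of_lt_pi hθ'.1 hθ'.2)
    rw [kv_inv_eq a M v r θ' (hρθ θ') hs']
    simp [kvInv]
  have d3 : deriv (fun θ' => rho2 a r θ' * Real.sin θ' * (kerrVaidyaMatrix a M v r θ')⁻¹ 2 1) θ
      = 0 := by rw [Filter.EventuallyEq.deriv_eq e3]; exact deriv_const θ _
  have key : deriv (fun v' => rho2 a r θ * Real.sin θ * (kerrVaidyaMatrix a M v' r θ)⁻¹ 0 1) v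
        + deriv (fun r' => rho2 a r' θ * Real.sin θ * (kerrVaidyaMatrix a M v r' θ)⁻¹ 1 1) r
        + deriv (fun θ' => rho2 a r θ' * Real.sin θ' * (kerrVaidyaMatrix a M v r θ')⁻¹ 2 1) θ
      = -2 * (M v - r) * Real.sin θ := by
    rw [d1, d2, d3]; ring
  refine ⟨key, ?_⟩
  rw [key]
  field_simp
end
end

section
/- Let a ∈ ℝ. For all r > 0 and ϑ ∈ (0,π), the coordinate divergence of the unit-normal vector field of the constant-r oblate spheroids in flat spacetime satisfies ∂_v(ρ²·sinϑ·(g₀(r,ϑ)⁻¹)₀₁) + ∂_r(ρ²·sinϑ·(g₀(r,ϑ)⁻¹)₁₁) + ∂_ϑ(ρ²·sinϑ·(g₀(r,ϑ)⁻¹)₂₁) = 2·r·sinϑ; equivalently, the trace of the extrinsic curvature of the oblate spheroid of constant r isometrically embedded in Minkowski spacetime equals K₀ = 2r/ρ². -/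
noncomputable section

open Real

/-- The flat oblate-spheroidal metric matrix in ingoing coordinates `(v,r,ϑ,ψ)`, for
rotation parameter `a`; it is the massless limit of the Kerr–Vaidya metric. -/
def flatOblateMatrix (a r θ : ℝ) : Matrix (Fin 4) (Fin 4) ℝ :=
  !![-1, 1, 0, 0;
     1, 0, 0, -(a * Real.sin θ ^ 2);
     0, 0, rho2 a r θ, 0;
     0, -(a * Real.sin θ ^ 2), 0, (r ^ 2 + a ^ 2) * Real.sin θ ^ 2]

lemma flat_inv (a r θ : ℝ) (hρ : rho2 a r θ ≠ 0) (hs : Real.sin θ ≠ 0) :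
    (flatOblateMatrix a r θ)⁻¹ = (rho2 a r θ)⁻¹ •
      !![a ^ 2 * Real.sin θ ^ 2, r ^ 2 + a ^ 2, 0, a;
         r ^ 2 + a ^ 2, r ^ 2 + a ^ 2, 0, a;
         0, 0, 1, 0;
         a, a, 0, (Real.sin θ ^ 2)⁻¹] := by
  apply Matrix.inv_eq_left_inv
  have hD : r ^ 2 + a ^ 2 * (1 - Real.sin θ ^ 2) ≠ 0 := by
    intro hc; apply hρ
    simp only [rho2, Real.cos_sq']; linear_combination hc
  ext i j
  fin_cases i <;> fin_cases j <;>
    simp [Matrix.mul_apply, Fin.sum_univ_four, flatOblateMatrix, rho2, Matrix.smul_apply,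
      Matrix.one_apply, Matrix.vecHead, Matrix.vecTail, Real.cos_sq']
  all_goals field_simp
  all_goals ring

lemma rho2_pos (a r θ : ℝ) (hr : 0 < r) : 0 < rho2 a r θ := by
  have := sq_nonneg (a * Real.cos θ)
  simp only [rho2]
  nlinarith

/-- The coordinate divergence of the unit-normal field of the constant-`r` oblate spheroids
in flat spacetime equals `2r·sinϑ`; equivalently, the trace of the extrinsic curvature of
the oblate spheroid of constant `r` isometrically embedded in Minkowski spacetime equals
`K₀ = 2r/ρ²`. -/
theorem flat_extrinsic_curvature_trace (a : ℝ) (r θ : ℝ) (hr : 0 < r)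
    (hθ : θ ∈ Set.Ioo 0 π) :
    deriv (fun _v : ℝ => rho2 a r θ * Real.sin θ * (flatOblateMatrix a r θ)⁻¹ 0 1) 0
        + deriv (fun r' => rho2 a r' θ * Real.sin θ * (flatOblateMatrix a r' θ)⁻¹ 1 1) r
        + deriv (fun θ' => rho2 a r θ' * Real.sin θ' * (flatOblateMatrix a r θ')⁻¹ 2 1) θ
      = 2 * r * Real.sin θ ∧
    (rho2 a r θ * Real.sin θ)⁻¹ *
        (deriv (fun _v : ℝ => rho2 a r θ * Real.sin θ * (flatOblateMatrix a r θ)⁻¹ 0 1) 0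
          + deriv (fun r' => rho2 a r' θ * Real.sin θ * (flatOblateMatrix a r' θ)⁻¹ 1 1) r
          + deriv (fun θ' => rho2 a r θ' * Real.sin θ' * (flatOblateMatrix a r θ')⁻¹ 2 1) θ)
      = 2 * r / rho2 a r θ := by
  have hsin : 0 < Real.sin θ := Real.sin_pos_of_pos_of_lt_pi hθ.1 hθ.2
  have hs : Real.sin θ ≠ 0 := ne_of_gt hsin
  have hρ : rho2 a r θ ≠ 0 := ne_of_gt (rho2_pos a r θ hr)
  have h1 : deriv (fun _v : ℝ => rho2 a r θ * Real.sin θ * (flatOblateMatrix a r θ)⁻¹ 0 1) 0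
      = 0 := deriv_const _ _
  have hev2 : (fun r' => rho2 a r' θ * Real.sin θ * (flatOblateMatrix a r' θ)⁻¹ 1 1)
      =ᶠ[nhds r] fun r' => (r' ^ 2 + a ^ 2) * Real.sin θ := by
    filter_upwards [eventually_gt_nhds hr] with x hx
    have hρx : rho2 a x θ ≠ 0 := ne_of_gt (rho2_pos a x θ hx)
    rw [flat_inv a x θ hρx hs]
    simp [Matrix.smul_apply]
    field_simp
  have h2 : deriv (fun r' => rho2 a r' θ * Real.sin θ * (flatOblateMatrix a r' θ)⁻¹ 1 1) r
      = 2 * r * Real.sin θ := by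
    rw [hev2.deriv_eq]
    have hd : HasDerivAt (fun r' : ℝ => (r' ^ 2 + a ^ 2) * Real.sin θ) (2 * r * Real.sin θ) r := by
      have h1' : HasDerivAt (fun r' : ℝ => r' ^ 2 + a ^ 2) (2 * r) r := by
        simpa using (hasDerivAt_pow 2 r).add_const (a ^ 2)
      simpa using h1'.mul_const (Real.sin θ)
    exact hd.deriv
  have hev3 : (fun θ' => rho2 a r θ' * Real.sin θ' * (flatOblateMatrix a r θ')⁻¹ 2 1)
      =ᶠ[nhds θ] fun _ => (0 : ℝ) := by
    have hsev : ∀ᶠ θ' in nhds θ, 0 < Real.sin θ' :=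
      Real.continuous_sin.continuousAt.eventually (eventually_gt_nhds hsin)
    filter_upwards [hsev] with x hx
    have hρx : rho2 a r x ≠ 0 := ne_of_gt (rho2_pos a r x hr)
    rw [flat_inv a r x hρx (ne_of_gt hx)]
    simp [Matrix.smul_apply]
  have h3 : deriv (fun θ' => rho2 a r θ' * Real.sin θ' * (flatOblateMatrix a r θ')⁻¹ 2 1) θ
      = 0 := by
    rw [hev3.deriv_eq]
    simp
  refine ⟨by rw [h1, h2, h3]; ring, ?_⟩
  rw [h1, h2, h3]
  field_simp
  ring
end
end

section
/- For all a ≠ 0 and all r > 0, ∫₀^{π} sin³ϑ/(r² + a²·cos²ϑ) dϑ = (2·(r² + a²)/(a³·r))·arctan(a/r) − 2/a². -/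
open Real

/-- The ϑ-integral multiplying `M′(v)` in the evaluation of the Kodama-like Noether charge
of Kerr–Vaidya spacetime. -/
theorem theta_integral_sin_cubed (a r : ℝ) (ha : a ≠ 0) (hr : 0 < r) :
    ∫ θ in (0:ℝ)..π, Real.sin θ ^ 3 / (r ^ 2 + a ^ 2 * Real.cos θ ^ 2)
      = 2 * (r ^ 2 + a ^ 2) / (a ^ 3 * r) * Real.arctan (a / r) - 2 / a ^ 2 := by
  have hr' : r ≠ 0 := hr.ne'
  have hden : ∀ θ : ℝ, r ^ 2 + a ^ 2 * Real.cos θ ^ 2 ≠ 0 := fun θ => by positivity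
  set F : ℝ → ℝ := fun θ => Real.cos θ / a ^ 2
      - (a ^ 2 + r ^ 2) / (a ^ 3 * r) * Real.arctan (a * Real.cos θ / r) with hF
  have hderiv : ∀ θ ∈ Set.uIcc (0:ℝ) π, HasDerivAt F
      (Real.sin θ ^ 3 / (r ^ 2 + a ^ 2 * Real.cos θ ^ 2)) θ := by
    intro θ _
    have h1 : HasDerivAt (fun θ => Real.cos θ / a ^ 2) (-Real.sin θ / a ^ 2) θ :=
      (Real.hasDerivAt_cos θ).div_const _
    have h2 : HasDerivAt (fun θ => a * Real.cos θ / r) (a * -Real.sin θ / r) θ :=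
      ((Real.hasDerivAt_cos θ).const_mul a).div_const r
    have h3 : HasDerivAt (fun θ => Real.arctan (a * Real.cos θ / r))
        ((1 / (1 + (a * Real.cos θ / r) ^ 2)) * (a * -Real.sin θ / r)) θ :=
      (Real.hasDerivAt_arctan _).comp θ h2
    have h5 := h1.sub (h3.const_mul ((a ^ 2 + r ^ 2) / (a ^ 3 * r)))
    refine h5.congr_deriv ?_
    have h4 : 1 + (a * Real.cos θ / r) ^ 2 = (r ^ 2 + a ^ 2 * Real.cos θ ^ 2) / r ^ 2 := by
      field_simp
    rw [h4]
    have hd := hden θ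
    have hs : Real.sin θ ^ 3 = Real.sin θ * (1 - Real.cos θ ^ 2) := by
      rw [← Real.sin_sq]; ring
    rw [hs]
    field_simp
    ring
  have hint : IntervalIntegrable
      (fun θ => Real.sin θ ^ 3 / (r ^ 2 + a ^ 2 * Real.cos θ ^ 2)) MeasureTheory.volume 0 π := by
    apply Continuous.intervalIntegrable
    exact (Real.continuous_sin.pow 3).div
      (continuous_const.add (continuous_const.mul (Real.continuous_cos.pow 2))) hden
  rw [intervalIntegral.integral_eq_sub_of_hasDerivAt hderiv hint]
  simp only [hF, Real.cos_pi, Real.cos_zero]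
  rw [show a * (-1 : ℝ) / r = -(a / r) by ring, Real.arctan_neg, show a * (1:ℝ) / r = a / r by ring]
  ring
end

section
/- For all a ≠ 0 and all r > 0, a³ · ∫₀^{π} sin³ϑ·(a²·cos²ϑ − r²)/(r² + a²·cos²ϑ)² dϑ = 4·r·arctan(a/r) − 4·a. -/
open Real

/-- A ϑ-integral arising in the evaluation of the angular-momentum Noether charge of
Kerr–Vaidya spacetime. -/
theorem theta_integral_angular_one (a r : ℝ) (ha : a ≠ 0) (hr : 0 < r) :
    a ^ 3 * ∫ θ in (0:ℝ)..π,
        Real.sin θ ^ 3 * (a ^ 2 * Real.cos θ ^ 2 - r ^ 2)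
          / (r ^ 2 + a ^ 2 * Real.cos θ ^ 2) ^ 2
      = 4 * r * Real.arctan (a / r) - 4 * a := by
  have hr' : r ≠ 0 := ne_of_gt hr
  have hD : ∀ θ : ℝ, r ^ 2 + a ^ 2 * Real.cos θ ^ 2 ≠ 0 := fun θ => by positivity
  set G : ℝ → ℝ := fun θ =>
      (a ^ 2 + r ^ 2) / a ^ 2 * (Real.cos θ / (r ^ 2 + a ^ 2 * Real.cos θ ^ 2))
      - 2 * r / a ^ 3 * Real.arctan (a * Real.cos θ / r) + Real.cos θ / a ^ 2 with hG
  have key : ∀ θ : ℝ, HasDerivAt G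
      (Real.sin θ ^ 3 * (a ^ 2 * Real.cos θ ^ 2 - r ^ 2)
        / (r ^ 2 + a ^ 2 * Real.cos θ ^ 2) ^ 2) θ := by
    intro θ
    have hc : HasDerivAt Real.cos (-Real.sin θ) θ := Real.hasDerivAt_cos θ
    have hden : HasDerivAt (fun θ : ℝ => r ^ 2 + a ^ 2 * Real.cos θ ^ 2)
        (a ^ 2 * (2 * Real.cos θ ^ 1 * (-Real.sin θ))) θ :=
      ((hc.pow 2).const_mul (a ^ 2)).const_add (r ^ 2)
    have h1 : HasDerivAt (fun θ : ℝ => Real.cos θ / (r ^ 2 + a ^ 2 * Real.cos θ ^ 2))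
        ((-Real.sin θ * (r ^ 2 + a ^ 2 * Real.cos θ ^ 2)
          - Real.cos θ * (a ^ 2 * (2 * Real.cos θ ^ 1 * (-Real.sin θ))))
          / (r ^ 2 + a ^ 2 * Real.cos θ ^ 2) ^ 2) θ := hc.div hden (hD θ)
    have hin : HasDerivAt (fun θ : ℝ => a * Real.cos θ / r) (a * -Real.sin θ / r) θ :=
      (hc.const_mul a).div_const r
    have h2 : HasDerivAt (fun θ : ℝ => Real.arctan (a * Real.cos θ / r))
        ((1 / (1 + (a * Real.cos θ / r) ^ 2)) * (a * -Real.sin θ / r)) θ :=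
      (Real.hasDerivAt_arctan _).comp θ hin
    have h := ((h1.const_mul ((a ^ 2 + r ^ 2) / a ^ 2)).sub
        (h2.const_mul (2 * r / a ^ 3))).add (hc.div_const (a ^ 2))
    refine h.congr_deriv ?_
    have hsin : Real.sin θ ^ 2 = 1 - Real.cos θ ^ 2 := Real.sin_sq θ
    have h3 : Real.sin θ ^ 3 = Real.sin θ * (1 - Real.cos θ ^ 2) := by
      rw [← hsin]; ring
    rw [h3]
    have h1r : 1 + (a * Real.cos θ / r) ^ 2 = (r ^ 2 + a ^ 2 * Real.cos θ ^ 2) / r ^ 2 := by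
      field_simp
    rw [h1r]
    field_simp
    ring
  have hcont : Continuous (fun θ : ℝ =>
      Real.sin θ ^ 3 * (a ^ 2 * Real.cos θ ^ 2 - r ^ 2)
        / (r ^ 2 + a ^ 2 * Real.cos θ ^ 2) ^ 2) := by
    apply Continuous.div
    · fun_prop
    · fun_prop
    · intro θ; exact pow_ne_zero 2 (hD θ)
  rw [intervalIntegral.integral_eq_sub_of_hasDerivAt (fun θ _ => key θ)
      (hcont.intervalIntegrable _ _)]
  simp only [hG, Real.cos_pi, Real.cos_zero]
  rw [show a * (-1 : ℝ) / r = -(a / r) by ring, Real.arctan_neg,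
    show a * (1:ℝ) / r = a / r by ring]
  field_simp
  ring
end

section
/- For all a ≠ 0 and all r > 0, 2·a·r⁴ · ∫₀^{π} sin³ϑ/(r² + a²·cos²ϑ)² dϑ = (2·r·(a² − r²)/a²)·arctan(a/r) + 2·r²/a. -/
open Real

/-- A ϑ-integral arising in the evaluation of the angular-momentum Noether charge of
Kerr–Vaidya spacetime. -/
theorem theta_integral_angular_two (a r : ℝ) (ha : a ≠ 0) (hr : 0 < r) :
    2 * a * r ^ 4 * ∫ θ in (0:ℝ)..π,
        Real.sin θ ^ 3 / (r ^ 2 + a ^ 2 * Real.cos θ ^ 2) ^ 2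
      = 2 * r * (a ^ 2 - r ^ 2) / a ^ 2 * Real.arctan (a / r) + 2 * r ^ 2 / a := by
  have hr' : r ≠ 0 := ne_of_gt hr
  set F : ℝ → ℝ := fun θ =>
    -((a ^ 2 - r ^ 2) / (2 * a ^ 3 * r ^ 3) * Real.arctan (a * Real.cos θ / r)
      + (a ^ 2 + r ^ 2) / (2 * a ^ 2 * r ^ 2)
        * (Real.cos θ / (r ^ 2 + a ^ 2 * Real.cos θ ^ 2))) with hF
  have hD : ∀ θ : ℝ, r ^ 2 + a ^ 2 * Real.cos θ ^ 2 ≠ 0 := by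
    intro θ
    have : 0 < r ^ 2 + a ^ 2 * Real.cos θ ^ 2 := by positivity
    exact ne_of_gt this
  have key : ∀ θ ∈ Set.uIcc (0:ℝ) π,
      HasDerivAt F (Real.sin θ ^ 3 / (r ^ 2 + a ^ 2 * Real.cos θ ^ 2) ^ 2) θ := by
    intro θ _
    have h1 : HasDerivAt (fun θ => a * Real.cos θ / r)
        (a * (-Real.sin θ) / r) θ :=
      ((Real.hasDerivAt_cos θ).const_mul a).div_const r
    have h2 : HasDerivAt (fun θ => Real.arctan (a * Real.cos θ / r))
        ((1 / (1 + (a * Real.cos θ / r) ^ 2)) * (a * (-Real.sin θ) / r)) θ :=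
      by have := (Real.hasDerivAt_arctan (a * Real.cos θ / r)).comp θ h1; exact this
    have h3 : HasDerivAt (fun θ => r ^ 2 + a ^ 2 * Real.cos θ ^ 2)
        (a ^ 2 * (2 * Real.cos θ ^ 1 * (-Real.sin θ))) θ :=
      (((Real.hasDerivAt_cos θ).pow 2).const_mul (a ^ 2)).const_add (r ^ 2)
    have h4 : HasDerivAt (fun θ => Real.cos θ / (r ^ 2 + a ^ 2 * Real.cos θ ^ 2))
        (((-Real.sin θ) * (r ^ 2 + a ^ 2 * Real.cos θ ^ 2)
          - Real.cos θ * (a ^ 2 * (2 * Real.cos θ ^ 1 * (-Real.sin θ))))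
          / (r ^ 2 + a ^ 2 * Real.cos θ ^ 2) ^ 2) θ :=
      (Real.hasDerivAt_cos θ).div h3 (hD θ)
    have h5 := ((h2.const_mul ((a ^ 2 - r ^ 2) / (2 * a ^ 3 * r ^ 3))).add
      (h4.const_mul ((a ^ 2 + r ^ 2) / (2 * a ^ 2 * r ^ 2)))).neg
    convert h5 using 1
    · rfl
    · rfl
    · rfl
    have hden : 1 + (a * Real.cos θ / r) ^ 2 ≠ 0 := by positivity
    have hsin : Real.sin θ ^ 2 = 1 - Real.cos θ ^ 2 := by
      have := Real.sin_sq_add_cos_sq θ; linarith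
    have hs3 : Real.sin θ ^ 3 = Real.sin θ * (1 - Real.cos θ ^ 2) := by
      have : Real.sin θ ^ 3 = Real.sin θ * Real.sin θ ^ 2 := by ring
      rw [this, hsin]
    rw [hs3]
    field_simp
    ring
  have hcont : ContinuousOn (fun θ => Real.sin θ ^ 3 / (r ^ 2 + a ^ 2 * Real.cos θ ^ 2) ^ 2)
      (Set.uIcc (0:ℝ) π) := by
    apply ContinuousOn.div
    · fun_prop
    · fun_prop
    · intro θ _
      exact pow_ne_zero 2 (hD θ)
  have hint := intervalIntegral.integral_eq_sub_of_hasDerivAt key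
    (hcont.intervalIntegrable)
  rw [hint, hF]
  simp only [Real.cos_pi, Real.cos_zero]
  have harct : Real.arctan (a * (-1) / r) = -Real.arctan (a / r) := by
    rw [show a * (-1) / r = -(a / r) by ring, Real.arctan_neg]
  rw [harct]
  have hd1 : r ^ 2 + a ^ 2 * (-1 : ℝ) ^ 2 ≠ 0 := by positivity
  have hd2 : r ^ 2 + a ^ 2 * (1 : ℝ) ^ 2 ≠ 0 := by positivity
  field_simp
  ring
end

section
/- For all a ≠ 0 and all r > 0, a³·r · ∫₀^{π} sin⁵ϑ/(r² + a²·cos²ϑ) dϑ = (2/a²)·((r² + a²)²·arctan(a/r) − a·r³) − (10/3)·a·r. -/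
open Real

/-- The ϑ-integral multiplying `M′(v)` in the evaluation of the angular-momentum Noether
charge of Kerr–Vaidya spacetime. -/
theorem theta_integral_sin_fifth (a r : ℝ) (ha : a ≠ 0) (hr : 0 < r) :
    a ^ 3 * r * ∫ θ in (0:ℝ)..π, Real.sin θ ^ 5 / (r ^ 2 + a ^ 2 * Real.cos θ ^ 2)
      = 2 / a ^ 2 * ((r ^ 2 + a ^ 2) ^ 2 * Real.arctan (a / r) - a * r ^ 3)
        - 10 / 3 * a * r := by
  have hr0 : r ≠ 0 := hr.ne'
  have hpos : ∀ u : ℝ, 0 < r ^ 2 + a ^ 2 * u ^ 2 := fun u =>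
    lt_of_lt_of_le (by positivity) (le_add_of_nonneg_right (by positivity))
  set g : ℝ → ℝ := fun u => (1 - u ^ 2) ^ 2 / (r ^ 2 + a ^ 2 * u ^ 2) with hg
  have hgc : Continuous g := by
    apply Continuous.div (by fun_prop) (by fun_prop)
    exact fun u => (hpos u).ne'
  have hsub : (∫ θ in (0:ℝ)..π, Real.sin θ ^ 5 / (r ^ 2 + a ^ 2 * Real.cos θ ^ 2))
      = ∫ u in (-1:ℝ)..1, g u := by
    have h1 : (∫ θ in (0:ℝ)..π, Real.sin θ ^ 5 / (r ^ 2 + a ^ 2 * Real.cos θ ^ 2))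
        = -∫ θ in (0:ℝ)..π, (-Real.sin θ) • g (Real.cos θ) := by
      rw [← intervalIntegral.integral_neg]
      apply intervalIntegral.integral_congr
      intro θ _
      have hs : Real.sin θ ^ 2 = 1 - Real.cos θ ^ 2 := Real.sin_sq θ
      simp only [hg, smul_eq_mul, neg_neg]
      rw [← hs]
      ring_nf
    have hcd := intervalIntegral.integral_comp_smul_deriv (a := (0:ℝ)) (b := π)
      (f := Real.cos) (f' := fun θ => -Real.sin θ) (g := g)
      (fun x _ => Real.hasDerivAt_cos x) (by fun_prop) hgc
    simp only [Function.comp_def] at hcd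
    rw [h1, hcd, Real.cos_zero, Real.cos_pi, intervalIntegral.integral_symm, neg_neg]
  rw [hsub]
  -- explicit antiderivative
  set F : ℝ → ℝ := fun u => u ^ 3 / (3 * a ^ 2) - (2 * a ^ 2 + r ^ 2) / a ^ 4 * u
      + (a ^ 2 + r ^ 2) ^ 2 / (a ^ 4 * (a * r)) * Real.arctan (a * u / r) with hF
  have hderiv : ∀ u : ℝ, HasDerivAt F (g u) u := by
    intro u
    have h1 : HasDerivAt (fun u : ℝ => u ^ 3 / (3 * a ^ 2)) (3 * u ^ 2 / (3 * a ^ 2)) u := by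
      simpa using (hasDerivAt_pow 3 u).div_const (3 * a ^ 2)
    have h2 : HasDerivAt (fun u : ℝ => (2 * a ^ 2 + r ^ 2) / a ^ 4 * u)
        ((2 * a ^ 2 + r ^ 2) / a ^ 4) u := by
      simpa using (hasDerivAt_id u).const_mul ((2 * a ^ 2 + r ^ 2) / a ^ 4)
    have h3 : HasDerivAt (fun u : ℝ => a * u / r) (a / r) u := by
      simpa using ((hasDerivAt_id u).const_mul a).div_const r
    have h4 : HasDerivAt (fun u : ℝ => Real.arctan (a * u / r))
        (1 / (1 + (a * u / r) ^ 2) * (a / r)) u := by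
      simpa [Function.comp_def] using (Real.hasDerivAt_arctan (a * u / r)).comp u h3
    have h5 := ((h1.sub h2).add (h4.const_mul ((a ^ 2 + r ^ 2) ^ 2 / (a ^ 4 * (a * r)))))
    convert h5 using 1
    · rfl
    · rfl
    · rfl
    have hq : (1 : ℝ) + (a * u / r) ^ 2 ≠ 0 := by positivity
    simp only [hg]
    field_simp
    ring
  have hint : IntervalIntegrable g MeasureTheory.volume (-1) 1 := hgc.intervalIntegrable _ _
  rw [intervalIntegral.integral_eq_sub_of_hasDerivAt (fun u _ => hderiv u) hint]
  simp only [hF]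
  rw [show a * (-1) / r = -(a / r) by ring, Real.arctan_neg, mul_one]
  field_simp
  ring
end
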